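/- The unique formal power series solution B(x,t) = Σ B_k(x) t^k/k! over ℚ[x] of the equation B⁽⁴⁾B - 4B'''B' + 3(B'')² + 4x(B''B - (B')²) + 2B² = 0 with B₀ = 1, B₁ = B₂ = B₃ = 0 has twelfth coefficient B₁₂(x) = -512x⁴ - 960x² - 408. -/

import Mathlib

/-!
In the exponential coefficients `a k = k! * [t^k] B` (the `B_k`; `expCoeff k B` below) the formal
derivative is the shift `a k ↦ a (k + 1)` and products become binomial convolutions, so the `n`-th
coefficient of the equation reads `a (n + 4) * a 0 + (terms in a 0, …, a (n + 3)) = 0`. With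
`a 0 = 1` this solves for `a 4, …, a 12` in turn. The recursion has integer coefficients and needs
no division, so it runs over any commutative ring, with `x` in place of the polynomial variable.
-/

open PowerSeries

/-- The blowup expression `B⁽⁴⁾B - 4B'''B' + 3(B'')² + 4x(B''B - (B')²) + 2B²`
for a formal power series `B` over `ℚ[x]`, with formal derivatives in `t`. -/
noncomputable def blowupExpr (B : PowerSeries (Polynomial ℚ)) : PowerSeries (Polynomial ℚ) :=
  let d := fun f => PowerSeries.derivativeFun (R := Polynomial ℚ) f
  d (d (d (d B))) * B - 4 * d (d (d B)) * d B + 3 * (d (d B)) ^ 2 +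
    4 * PowerSeries.C (R := Polynomial ℚ) Polynomial.X * (d (d B) * B - (d B) ^ 2) +
    2 * B ^ 2

open Finset
open scoped Nat

namespace PowerSeries

variable {R : Type*} [CommSemiring R]

noncomputable def expCoeff (n : ℕ) : R⟦X⟧ →ₗ[R] R := (n ! : R) • coeff n

theorem expCoeff_apply (n : ℕ) (f : R⟦X⟧) : expCoeff n f = n ! * coeff n f := rfl

theorem expCoeff_C_mul (n : ℕ) (r : R) (f : R⟦X⟧) : expCoeff n (C r * f) = r * expCoeff n f := by
  rw [← smul_eq_C_mul, map_smul, smul_eq_mul]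

theorem expCoeff_derivative (n : ℕ) (f : R⟦X⟧) :
    expCoeff n (d⁄dX R f) = expCoeff (n + 1) f := by
  rw [expCoeff_apply, expCoeff_apply, coeff_derivative, Nat.factorial_succ, Nat.cast_mul]
  push_cast
  ring

theorem expCoeff_mul (n : ℕ) (f g : R⟦X⟧) :
    expCoeff n (f * g) =
      ∑ p ∈ antidiagonal n, (n.choose p.1 : R) * expCoeff p.1 f * expCoeff p.2 g := by
  rw [expCoeff_apply, coeff_mul, mul_sum]
  refine sum_congr rfl fun ⟨i, j⟩ hij => ?_
  rw [HasAntidiagonal.mem_antidiagonal] at hij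
  subst hij
  rw [expCoeff_apply, expCoeff_apply, ← Nat.add_choose_mul_factorial_mul_factorial, Nat.choose_symm_add]
  push_cast
  ring

end PowerSeries

section BlowupRecurrence

variable {R : Type*} [CommRing R]

def blowupTerm (x : R) (a : ℕ → R) (i j : ℕ) : R :=
  a (i + 4) * a j - 4 * a (i + 3) * a (j + 1) + 3 * a (i + 2) * a (j + 2) +
    4 * x * (a (i + 2) * a j - a (i + 1) * a (j + 1)) + 2 * a i * a j

theorem apply_twelve_of_blowup_recurrence (x : R) (a : ℕ → R)
    (h : ∀ n, ∑ p ∈ antidiagonal n, (n.choose p.1 : R) * blowupTerm x a p.1 p.2 = 0)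
    (h0 : a 0 = 1) (h1 : a 1 = 0) (h2 : a 2 = 0) (h3 : a 3 = 0) :
    a 12 = -512 * x ^ 4 - 960 * x ^ 2 - 408 := by
  have e : ∀ n, ∑ k ∈ range (n + 1), (n.choose k : R) * blowupTerm x a k (n - k) = 0 := fun n => by
    rw [← h n, Nat.sum_antidiagonal_eq_sum_range_succ_mk]
  have h4 : a 4 = -2 := by
    have := e 0
    simp only [sum_range_succ, sum_range_zero, blowupTerm, Nat.choose, Nat.reduceAdd, Nat.reduceSub,
      h0, h1, h2, h3] at this
    linear_combination this
  have h5 : a 5 = 0 := by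
    have := e 1
    simp only [sum_range_succ, sum_range_zero, blowupTerm, Nat.choose, Nat.reduceAdd, Nat.reduceSub,
      h0, h1, h2, h3, h4] at this
    linear_combination this
  have h6 : a 6 = 8 * x := by
    have := e 2
    simp only [sum_range_succ, sum_range_zero, blowupTerm, Nat.choose, Nat.reduceAdd, Nat.reduceSub,
      h0, h1, h2, h3, h4, h5] at this
    linear_combination this
  have h7 : a 7 = 0 := by
    have := e 3
    simp only [sum_range_succ, sum_range_zero, blowupTerm, Nat.choose, Nat.reduceAdd, Nat.reduceSub,
      h0, h1, h2, h3, h4, h5, h6] at this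
    linear_combination this
  have h8 : a 8 = -32 * x ^ 2 - 4 := by
    have := e 4
    simp only [sum_range_succ, sum_range_zero, blowupTerm, Nat.choose, Nat.reduceAdd, Nat.reduceSub,
      h0, h1, h2, h3, h4, h5, h6, h7] at this
    linear_combination this
  have h9 : a 9 = 0 := by
    have := e 5
    simp only [sum_range_succ, sum_range_zero, blowupTerm, Nat.choose, Nat.reduceAdd, Nat.reduceSub,
      h0, h1, h2, h3, h4, h5, h6, h7, h8] at this
    linear_combination this
  have h10 : a 10 = 128 * x ^ 3 + 96 * x := by
    have := e 6
    simp only [sum_range_succ, sum_range_zero, blowupTerm, Nat.choose, Nat.reduceAdd, Nat.reduceSub,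
      h0, h1, h2, h3, h4, h5, h6, h7, h8, h9] at this
    linear_combination this
  have h11 : a 11 = 0 := by
    have := e 7
    simp only [sum_range_succ, sum_range_zero, blowupTerm, Nat.choose, Nat.reduceAdd, Nat.reduceSub,
      h0, h1, h2, h3, h4, h5, h6, h7, h8, h9, h10] at this
    linear_combination this
  have := e 8
  simp only [sum_range_succ, sum_range_zero, blowupTerm, Nat.choose, Nat.reduceAdd, Nat.reduceSub,
    h0, h1, h2, h3, h4, h5, h6, h7, h8, h9, h10, h11] at this
  linear_combination this

end BlowupRecurrence

local notation "D" => d⁄dX (Polynomial ℚ)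

theorem blowupExpr_eq (B : PowerSeries (Polynomial ℚ)) :
    blowupExpr B = D (D (D (D B))) * B - C 4 * (D (D (D B)) * D B) + C 3 * (D (D B) * D (D B)) +
      C (4 * Polynomial.X) * (D (D B) * B - D B * D B) + C 2 * (B * B) := by
  -- `derivativeFun` is definitionally the derivation `d⁄dX`.
  change D (D (D (D B))) * B - 4 * D (D (D B)) * D B + 3 * D (D B) ^ 2 +
    4 * C Polynomial.X * (D (D B) * B - D B ^ 2) + 2 * B ^ 2 = _
  simp only [map_mul, map_ofNat]
  ring

theorem expCoeff_blowupExpr (B : PowerSeries (Polynomial ℚ)) (n : ℕ) :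
    expCoeff n (blowupExpr B) = ∑ p ∈ antidiagonal n,
      (n.choose p.1 : Polynomial ℚ) * blowupTerm Polynomial.X (expCoeff · B) p.1 p.2 := by
  simp only [blowupExpr_eq, map_add, map_sub, expCoeff_C_mul]
  simp only [expCoeff_mul, expCoeff_derivative, mul_sum, ← sum_add_distrib, ← sum_sub_distrib]
  refine sum_congr rfl fun p _ => ?_
  rw [blowupTerm]
  ring

/-- Any formal power series solution of the blowup equation with
`B₀ = 1`, `B₁ = B₂ = B₃ = 0` has `B₁₂(x) = -512x⁴ - 960x² - 408`
(where `B_k = k! · coeff k B`). -/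
theorem stmt_13 (B : PowerSeries (Polynomial ℚ)) (hB : blowupExpr B = 0)
    (h0 : PowerSeries.coeff 0 B = 1) (h1 : PowerSeries.coeff 1 B = 0)
    (h2 : PowerSeries.coeff 2 B = 0) (h3 : PowerSeries.coeff 3 B = 0) :
    (Nat.factorial 12 : Polynomial ℚ) * PowerSeries.coeff 12 B =
      -512 * Polynomial.X ^ 4 - 960 * Polynomial.X ^ 2 - 408 := by
  have hrec (n : ℕ) := (expCoeff_blowupExpr B n).symm.trans (by rw [hB, map_zero])
  have hvanish {k : ℕ} (hk : coeff k B = 0) : expCoeff k B = 0 := by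
    rw [expCoeff_apply, hk, mul_zero]
  rw [← expCoeff_apply]
  refine apply_twelve_of_blowup_recurrence _ _ hrec ?_ (hvanish h1) (hvanish h2) (hvanish h3)
  rw [expCoeff_apply, h0, Nat.factorial_zero, Nat.cast_one, mul_one]
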